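/- arXiv:2509.20979 — 7 statements merged into one kernel-verified Lean document; each statement's English description precedes it below -/
import Mathlib

section
/- If the optimal offline caching algorithm OPT (following Belady's rule) evicts an item x at time t' and x is requested again at time t > t' incurring a miss, then every item y in OPT's cache at time t must have been requested at some point in the interval (t', t). -/
/-- The time (as an extended natural number, `⊤` if never) of the next request of
item `x` at or after time `s` in the request sequence `σ`. -/
noncomputable def nextReq {α : Type*} (σ : ℕ → α) (s : ℕ) (x : α) : ℕ∞ :=
  sInf {n : ℕ∞ | ∃ m : ℕ, n = (m : ℕ∞) ∧ s ≤ m ∧ σ m = x}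

/-- Let `C` be the cache contents of the offline optimal algorithm OPT
following Belady's rule: on an eviction, the evicted item's next request is furthest
in the future among all items kept in the cache (here instantiated at time `t'`), and
items are only loaded on demand.  If OPT evicts item `x` at time `t'` and `x` is next
requested at time `t > t'` (with no request of `x` strictly between) incurring a
miss, then every item `y` in OPT's cache at time `t` was requested at some point in
the open interval `(t', t)`. -/
theorem belady_kept_items_requested_before_next_request
    {α : Type*} [DecidableEq α] (σ : ℕ → α) (C : ℕ → Finset α)
    (t' t : ℕ) (x : α)
    (hDemand : ∀ s y, y ∈ C (s + 1) → y ∉ C s → σ s = y)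
    (hBelady : ∀ y ∈ C (t' + 1), nextReq σ (t' + 1) y ≤ nextReq σ (t' + 1) x)
    (hx_in : x ∈ C t') (hx_evicted : x ∉ C (t' + 1))
    (hlt : t' < t) (hreq : σ t = x) (hmiss : x ∉ C t)
    (hfirst : ∀ s, t' < s → s < t → σ s ≠ x) :
    ∀ y ∈ C t, ∃ s, t' < s ∧ s < t ∧ σ s = y := by
  intro y hy
  have hyx : y ≠ x := fun h => hmiss (h ▸ hy)
  by_cases hy1 : y ∈ C (t' + 1)
  · -- use Belady: nextReq y ≤ nextReq x ≤ t
    have hxle : nextReq σ (t' + 1) x ≤ (t : ℕ∞) := by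
      apply sInf_le
      exact ⟨t, rfl, hlt, hreq⟩
    have hyle : nextReq σ (t' + 1) y ≤ (t : ℕ∞) :=
      le_trans (hBelady y hy1) hxle
    -- extract a witness m ≤ t
    by_contra hc
    push_neg at hc
    have hlb : ((t : ℕ∞) + 1) ≤ nextReq σ (t' + 1) y := by
      apply le_sInf
      rintro n ⟨m, rfl, hm1, hm2⟩
      have hmt : ¬ m < t := by
        intro h
        exact (hc m (by omega) h) hm2
      have hmne : m ≠ t := by
        intro h; subst h; exact hyx (hm2 ▸ hreq ▸ rfl)
      have : t + 1 ≤ m := by omega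
      exact_mod_cast this
    have h2 : ((t : ℕ∞) + 1) ≤ (t : ℕ∞) := le_trans hlb hyle
    have h3 : (t + 1 : ℕ) ≤ t := by exact_mod_cast h2
    omega
  · -- y entered the cache at some step s with t'+1 ≤ s < t
    have key : ∀ b, y ∈ C (t' + 1 + b) → ∃ s, t' + 1 ≤ s ∧ s < t' + 1 + b ∧
        y ∉ C s ∧ y ∈ C (s + 1) := by
      intro b
      induction b with
      | zero => intro h; exact absurd h hy1
      | succ n ih =>
        intro h
        by_cases hn : y ∈ C (t' + 1 + n)
        · obtain ⟨s, h1, h2, h3, h4⟩ := ih hn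
          exact ⟨s, h1, by omega, h3, h4⟩
        · exact ⟨t' + 1 + n, by omega, by omega, hn, by
            have : t' + 1 + n + 1 = t' + 1 + (n + 1) := by omega
            rw [this]; exact h⟩
    have htb : t = t' + 1 + (t - t' - 1) := by omega
    obtain ⟨s, h1, h2, h3, h4⟩ := key (t - t' - 1) (by rw [← htb]; exact hy)
    exact ⟨s, by omega, by omega, hDemand s y h4 h3⟩
end

section
/- For any request sequence, if the sequence is partitioned greedily into maximal intervals each containing at most k distinct items (closing an interval when the next request is to a (k+1)-st distinct item), and the partition has X intervals, then any caching algorithm with cache size k, including the offline optimal, incurs at least X - 1 cache misses. -/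
/-!
While the requested item is a hit, the cache can only lose items, so over a stretch of
requests `a, …, b` with no miss after time `a`, every item requested in `[a, b]` sits in the
cache `C (a + 1)`. A non-final greedy interval together with the first request of the next
interval involves `k + 1` distinct items, more than the cache holds, so each such stretch
`(t i, t (i + 1)]` contains a miss; these stretches are disjoint.
-/

open Finset

section Paging

variable {α : Type*} [DecidableEq α] {σ : ℕ → α} {C : ℕ → Finset α}

theorem cache_succ_subset_of_hit (hsub : ∀ s, C (s + 1) ⊆ C s ∪ {σ s}) {s : ℕ}
    (hhit : σ s ∈ C s) : C (s + 1) ⊆ C s :=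
  (hsub s).trans (union_subset Subset.rfl (singleton_subset_iff.2 hhit))

theorem cache_subset_of_forall_hit (hsub : ∀ s, C (s + 1) ⊆ C s ∪ {σ s}) {a b : ℕ}
    (hab : a ≤ b) (hhit : ∀ s ∈ Ico a b, σ s ∈ C s) : C b ⊆ C a := by
  induction b, hab using Nat.le_induction with
  | base => exact Subset.rfl
  | succ b hab ih =>
    exact (cache_succ_subset_of_hit hsub (hhit b (mem_Ico.2 ⟨hab, b.lt_succ_self⟩))).trans
      (ih fun s hs => hhit s (Ico_subset_Ico_right b.le_succ hs))

theorem image_Icc_subset_cache_of_forall_hit (hsub : ∀ s, C (s + 1) ⊆ C s ∪ {σ s})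
    (hload : ∀ s, σ s ∈ C (s + 1)) {a b : ℕ} (hhit : ∀ s ∈ Ioc a b, σ s ∈ C s) :
    (Icc a b).image σ ⊆ C (a + 1) := by
  simp only [image_subset_iff, mem_Icc]
  rintro s ⟨has, hsb⟩
  rcases has.eq_or_lt with rfl | has
  · exact hload _
  · refine cache_subset_of_forall_hit hsub has (fun s' hs' => hhit s' ?_)
      (hhit s (mem_Ioc.2 ⟨has, hsb⟩))
    simp only [mem_Ico, mem_Ioc] at hs' ⊢
    omega

theorem exists_miss_of_lt_card_image_Icc {k : ℕ} (hsize : ∀ s, (C s).card ≤ k)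
    (hsub : ∀ s, C (s + 1) ⊆ C s ∪ {σ s}) (hload : ∀ s, σ s ∈ C (s + 1)) {a b : ℕ}
    (hcard : k < ((Icc a b).image σ).card) : ∃ s ∈ Ioc a b, σ s ∉ C s := by
  by_contra! hhit
  have := card_le_card (image_Icc_subset_cache_of_forall_hit hsub hload hhit)
  exact (this.trans (hsize _)).not_gt hcard

end Paging

theorem card_image_Icc_of_notMem {α : Type*} [DecidableEq α] {σ : ℕ → α} {a b : ℕ}
    (hab : a ≤ b) (hσ : σ b ∉ (Ico a b).image σ) :
    ((Icc a b).image σ).card = ((Ico a b).image σ).card + 1 := by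
  rw [← Ico_insert_right hab, image_insert, card_insert_of_notMem hσ]

theorem le_card_filter_range_of_exists_mem_Ioc {P : ℕ → Prop} [DecidablePred P]
    {t : ℕ → ℕ} {m n : ℕ} (ht : ∀ i < m, t i < t (i + 1)) (htn : t m < n)
    (hP : ∀ i < m, ∃ s ∈ Ioc (t i) (t (i + 1)), P s) : m ≤ ((range n).filter P).card := by
  induction m generalizing n with
  | zero => exact Nat.zero_le _
  | succ m ih =>
    obtain ⟨s, hs, hPs⟩ := hP m m.lt_succ_self
    rw [mem_Ioc] at hs
    have hprev := ih (n := t m + 1) (fun i hi => ht i (by omega)) (t m).lt_succ_self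
      (fun i hi => hP i (by omega))
    calc m + 1 ≤ ((range (t m + 1)).filter P).card + 1 := by omega
      _ = (insert s ((range (t m + 1)).filter P)).card :=
        (card_insert_of_notMem (by simp only [mem_filter, mem_range, not_and]; omega)).symm
      _ ≤ ((range n).filter P).card := by
        refine card_le_card (insert_subset (mem_filter.2 ⟨mem_range.2 (by omega), hPs⟩) ?_)
        exact filter_subset_filter P (range_subset_range.2 (by omega))

theorem greedy_interval_partition_lower_bound_general
    {α : Type*} [DecidableEq α] (σ : ℕ → α) (C : ℕ → Finset α)
    (k n X : ℕ) (t : ℕ → ℕ)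
    (htX : t X = n)
    (hmono : ∀ i < X, t i < t (i + 1))
    (hgreedy : ∀ i, i + 1 < X →
      ((Finset.Ico (t i) (t (i + 1))).image σ).card = k ∧
        σ (t (i + 1)) ∉ (Finset.Ico (t i) (t (i + 1))).image σ)
    (hsize : ∀ s, (C s).card ≤ k)
    (hsub : ∀ s, C (s + 1) ⊆ C s ∪ {σ s})
    (hload : ∀ s, σ s ∈ C (s + 1)) :
    X - 1 ≤ ((Finset.range n).filter (fun s => σ s ∉ C s)).card := by
  obtain _ | m := X
  · exact Nat.zero_le _
  have hmiss : ∀ i < m, ∃ s ∈ Ioc (t i) (t (i + 1)), σ s ∉ C s := fun i hi => by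
    obtain ⟨hk, hnew⟩ := hgreedy i (by omega)
    refine exists_miss_of_lt_card_image_Icc hsize hsub hload ?_
    rw [card_image_Icc_of_notMem (hmono i (by omega)).le hnew, hk]
    exact k.lt_succ_self
  exact le_card_filter_range_of_exists_mem_Ioc (fun i hi => hmono i (by omega))
    (htX ▸ hmono m m.lt_succ_self) hmiss

/-- Partition the request sequence `σ 0, …, σ (n-1)` greedily into `X`
maximal intervals `[t i, t (i+1))` with `t 0 = 0`, `t X = n`, each containing at most
`k` distinct items, where an interval is closed exactly when the next request is to a
`(k+1)`-st distinct item: every non-final interval contains exactly `k` distinct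
items and the first request of the following interval is not among them.  Then any
demand-paging algorithm with cache size `k` (cache `C`, loading the requested item,
adding only requested items, never exceeding `k` items) incurs at least `X − 1`
cache misses. -/
theorem greedy_interval_partition_lower_bound
    {α : Type*} [DecidableEq α] (σ : ℕ → α) (C : ℕ → Finset α)
    (k n X : ℕ) (t : ℕ → ℕ)
    (ht0 : t 0 = 0) (htX : t X = n)
    (hmono : ∀ i < X, t i < t (i + 1))
    (hatmost : ∀ i < X, ((Finset.Ico (t i) (t (i + 1))).image σ).card ≤ k)
    (hgreedy : ∀ i, i + 1 < X →
      ((Finset.Ico (t i) (t (i + 1))).image σ).card = k ∧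
        σ (t (i + 1)) ∉ (Finset.Ico (t i) (t (i + 1))).image σ)
    (hsize : ∀ s, (C s).card ≤ k)
    (hsub : ∀ s, C (s + 1) ⊆ C s ∪ {σ s})
    (hload : ∀ s, σ s ∈ C (s + 1)) :
    X - 1 ≤ ((Finset.range n).filter (fun s => σ s ∉ C s)).card :=
  greedy_interval_partition_lower_bound_general σ C k n X t htX hmono hgreedy hsize hsub hload
end

section
/- Consider a phase partition of a request sequence in which each phase contains at least k distinct items, and let c_i denote the number of distinct 'new' items requested in phase i (items not in the online algorithm's cache at the phase start). Let h_i denote the number of items in OPT's cache but not in the online algorithm's cache at the beginning of phase i, with h_1 = 0. Then the number of misses OPT incurs in phase i satisfies OPT_i ≥ c_i − h_i. -/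
/-- Consider phase `i`, covering request times `[a, b)`, of a phase
partition defined w.r.t. the online algorithm's cache `A`.  The new items of the
phase are the distinct requested items that are not in the online cache `A a` at the
phase start; their number is `cᵢ`.  Let `hᵢ` be the number of items in OPT's cache
`B a` but not in the online cache `A a` at the beginning of the phase.  If OPT is a
demand-paging algorithm (it only adds requested items), then the number `OPTᵢ` of
misses OPT incurs during the phase satisfies `OPTᵢ ≥ cᵢ − hᵢ`. -/
theorem opt_phase_misses_ge_new_items_sub_h
    {α : Type*} [DecidableEq α] (σ : ℕ → α) (A B : ℕ → Finset α) (a b : ℕ)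
    (hab : a ≤ b)
    (hBsub : ∀ s, B (s + 1) ⊆ B s ∪ {σ s}) :
    ((((Finset.Ico a b).image σ).filter (fun x => x ∉ A a)).card : ℤ)
        - ((B a \ A a).card : ℤ)
      ≤ (((Finset.Ico a b).filter (fun s => σ s ∉ B s)).card : ℤ) := by
  set X := ((Finset.Ico a b).image σ).filter (fun x => x ∉ A a) with hX
  set M := (Finset.Ico a b).filter (fun s => σ s ∉ B s) with hM
  have hsub : X ⊆ M.image σ ∪ (B a \ A a) := by
    intro x hx
    rw [hX, Finset.mem_filter, Finset.mem_image] at hx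
    obtain ⟨⟨s0, hs0, hσ0⟩, hxA⟩ := hx
    -- set of times in the phase when x is requested
    set T := (Finset.Ico a b).filter (fun s => σ s = x) with hT
    have hTne : T.Nonempty := ⟨s0, by simp [hT, hs0, hσ0]⟩
    set s := T.min' hTne with hs
    have hsT : s ∈ T := Finset.min'_mem _ _
    rw [hT, Finset.mem_filter] at hsT
    obtain ⟨hsIco, hσs⟩ := hsT
    rw [Finset.mem_Ico] at hsIco
    by_cases hmiss : σ s ∈ B s
    · -- x ∈ B a \ A a : descend from B s to B a
      have key : ∀ n, ∀ t, a + n = t → t ≤ s → x ∈ B t → x ∈ B a := by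
        intro n
        induction n with
        | zero => intro t ht _ hxB; rw [Nat.add_zero] at ht; rwa [ht]
        | succ m ih =>
            intro t ht hts hxB
            have ht' : t = (a + m) + 1 := by omega
            subst ht'
            have := hBsub (a + m) hxB
            rw [Finset.mem_union, Finset.mem_singleton] at this
            rcases this with h1 | h2
            · exact ih (a + m) rfl (by omega) h1
            · exfalso
              have hmem : (a + m) ∈ T := by
                rw [hT, Finset.mem_filter, Finset.mem_Ico]
                exact ⟨⟨by omega, by omega⟩, h2.symm⟩
              have := Finset.min'_le _ _ hmem
              omega
      have hxBa : x ∈ B a := by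
        have h0 : ∀ t, a + 0 = t → t ≤ s → x ∈ B t → x ∈ B a := by
          intro t ht _ hxB; simpa [← ht] using hxB
        exact key (s - a) s (by omega) le_rfl (hσs ▸ hmiss)
      exact Finset.mem_union_right _ (Finset.mem_sdiff.mpr ⟨hxBa, hxA⟩)
    · refine Finset.mem_union_left _ (Finset.mem_image.mpr ⟨s, ?_, hσs⟩)
      rw [hM, Finset.mem_filter, Finset.mem_Ico]
      exact ⟨⟨hsIco.1, hsIco.2⟩, hmiss⟩
  have h1 : X.card ≤ (M.image σ).card + (B a \ A a).card :=
    le_trans (Finset.card_le_card hsub) (Finset.card_union_le _ _)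
  have h2 : (M.image σ).card ≤ M.card := Finset.card_image_le
  have : X.card ≤ M.card + (B a \ A a).card := by omega
  push_cast
  linarith [this]
end

section
/- With the phase structure above, if every item in the online algorithm's cache at the end of phase i was requested during phase i, then OPT must have evicted at least h_{i+1} items during phase i, i.e., OPT_i ≥ h_{i+1}, where h_{i+1} is the number of items in OPT's cache but not in the online algorithm's cache at the start of phase i+1. -/
/-!
Since OPT's cache holds at most `k` items and the online cache at the end of the phase
holds at least `k`, `|B b \ A b| ≤ |A b \ B b|`. Every `x ∈ A b \ B b` was requested at
some time `s` in the phase, so OPT held `x` at time `s + 1` but no longer holds it at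
time `b`: OPT evicted `x` during the phase. OPT evicts at most one item per step, and
only on a miss, so at most `OPTᵢ` items are evicted during the phase.
-/

open Finset

section

variable {α : Type*} [DecidableEq α]

theorem mem_biUnion_Ico_sdiff_succ_of_mem_of_notMem (B : ℕ → Finset α) {x : α} {m n : ℕ}
    (hmn : m ≤ n) (hm : x ∈ B m) (hn : x ∉ B n) :
    x ∈ (Ico m n).biUnion fun t => B t \ B (t + 1) := by
  induction n, hmn using Nat.le_induction with
  | base => exact absurd hm hn
  | succ n hmn ih =>
    simp only [mem_biUnion, mem_Ico, mem_sdiff] at ih ⊢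
    by_cases hxn : x ∈ B n
    · exact ⟨n, ⟨hmn, n.lt_succ_self⟩, hxn, hn⟩
    · obtain ⟨t, ⟨hmt, htn⟩, hx⟩ := ih hxn
      exact ⟨t, ⟨hmt, htn.trans n.lt_succ_self⟩, hx⟩

theorem card_biUnion_Ico_sdiff_succ_le_card_misses (σ : ℕ → α) (B : ℕ → Finset α)
    (hBevict : ∀ s, (B s \ B (s + 1)).card ≤ if σ s ∈ B s then 0 else 1) (a b : ℕ) :
    ((Ico a b).biUnion fun t => B t \ B (t + 1)).card ≤
      ((Ico a b).filter fun s => σ s ∉ B s).card :=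
  calc ((Ico a b).biUnion fun t => B t \ B (t + 1)).card
      ≤ ∑ t ∈ Ico a b, (B t \ B (t + 1)).card := card_biUnion_le
    _ ≤ ∑ t ∈ Ico a b, if σ t ∈ B t then 0 else 1 := sum_le_sum fun t _ => hBevict t
    _ = ((Ico a b).filter fun s => σ s ∉ B s).card := by simp only [card_filter, ite_not]

end

/-- Phase `i` covers request times `[a, b)`; `A` is the online
algorithm's cache (full, with `k` items, at the end of the phase) and `B` is OPT's
cache (demand paging: at most `k` items, the requested item is loaded, and an item is
evicted—at most one per step—only on a miss).  If every item in the online cache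
`A b` at the end of phase `i` was requested during the phase, then OPT must have
evicted at least `h_{i+1}` items during the phase, and in particular its misses in
the phase satisfy `OPTᵢ ≥ h_{i+1}`, where `h_{i+1} = |B b \ A b|` is the number of
items in OPT's cache but not the online cache at the start of phase `i+1`. -/
theorem opt_phase_misses_ge_h_next
    {α : Type*} [DecidableEq α] (σ : ℕ → α) (A B : ℕ → Finset α) (a b k : ℕ)
    (hreq : ∀ x ∈ A b, ∃ s, a ≤ s ∧ s < b ∧ σ s = x)
    (hAfull : k ≤ (A b).card)
    (hBsize : ∀ s, (B s).card ≤ k)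
    (hBload : ∀ s, σ s ∈ B (s + 1))
    (hBevict : ∀ s, (B s \ B (s + 1)).card ≤ if σ s ∈ B s then 0 else 1) :
    (B b \ A b).card ≤ ((Finset.Ico a b).filter (fun s => σ s ∉ B s)).card := by
  have hcard : (B b \ A b).card ≤ (A b \ B b).card :=
    card_sdiff_le_card_sdiff_iff.2 ((hBsize b).trans hAfull)
  have hevicted : A b \ B b ⊆ (Ico a b).biUnion fun t => B t \ B (t + 1) := by
    intro x hx
    obtain ⟨hxA, hxB⟩ := mem_sdiff.1 hx
    obtain ⟨s, has, hsb, rfl⟩ := hreq x hxA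
    have hx' := mem_biUnion_Ico_sdiff_succ_of_mem_of_notMem B hsb (hBload s) hxB
    exact biUnion_subset_biUnion_of_subset_left _
      (Ico_subset_Ico_left (has.trans s.le_succ)) hx'
  calc (B b \ A b).card ≤ (A b \ B b).card := hcard
    _ ≤ ((Ico a b).biUnion fun t => B t \ B (t + 1)).card := card_le_card hevicted
    _ ≤ _ := card_biUnion_Ico_sdiff_succ_le_card_misses σ B hBevict a b
end

section
/- LARU is O(k)-robust: for any request sequence and any (possibly adversarial) predictions, the asymptotic ratio of LARU's misses to OPT's misses is at most k + log_b k + 2, which is at most 2k + 2 since log_b k ≤ k. -/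
open Filter Topology

/-- LARU is `O(k)`-robust.  For any request sequences (indexed by the
number `N` of completed phases) and arbitrary, possibly adversarial, predictions,
LARU's misses are at most `N (k + log_b k) + Σ cᵢ` while
`OPT ≥ max ((Σ cᵢ)/2, N − 1)`; hence the asymptotic ratio of LARU's misses to OPT's
misses, as `N → ∞`, is at most `k + log_b k + 2`, which is at most `2k + 2` since
`log_b k ≤ k`. -/
theorem laru_robustness
    (k : ℕ) (b : ℝ) (hb : 1 < b) (hk : 1 ≤ k)
    (hlogk : Real.logb b k ≤ (k : ℝ))
    (laru opt m : ℕ → ℝ)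
    (hlaru_nonneg : ∀ N, 0 ≤ laru N)
    (hm_nonneg : ∀ N, 0 ≤ m N)
    (hlaru : ∀ N, laru N ≤ (N : ℝ) * ((k : ℝ) + Real.logb b k) + m N)
    (hopt : ∀ N, max (m N / 2) ((N : ℝ) - 1) ≤ opt N) :
    Filter.limsup (fun N : ℕ => laru N / opt N) Filter.atTop
        ≤ (k : ℝ) + Real.logb b k + 2 ∧
      (k : ℝ) + Real.logb b k + 2 ≤ 2 * (k : ℝ) + 2 := by
  have hlogk0 : 0 ≤ Real.logb b k := Real.logb_nonneg hb (by exact_mod_cast hk)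
  set A : ℝ := (k : ℝ) + Real.logb b k with hAdef
  have hA : 0 ≤ A := by positivity
  refine ⟨?_, by linarith⟩
  -- auxiliary facts for N ≥ 2
  have key : ∀ N : ℕ, 2 ≤ N →
      laru N / opt N ≤ A + A / ((N : ℝ) - 1) + 2 ∧ 0 ≤ laru N / opt N := by
    intro N hN
    have hN1 : (1:ℝ) ≤ (N:ℝ) - 1 := by
      have : (2:ℝ) ≤ (N:ℝ) := by exact_mod_cast hN
      linarith
    have hNpos : (0:ℝ) < (N:ℝ) - 1 := by linarith
    have hopt1 : (N:ℝ) - 1 ≤ opt N := le_trans (le_max_right _ _) (hopt N)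
    have hopt2 : m N / 2 ≤ opt N := le_trans (le_max_left _ _) (hopt N)
    have hoptpos : 0 < opt N := lt_of_lt_of_le hNpos hopt1
    have h1 : laru N / opt N ≤ ((N:ℝ) * A + m N) / opt N := by
      gcongr
      exact hlaru N
    have h2 : ((N:ℝ) * A + m N) / opt N = (N:ℝ) * A / opt N + m N / opt N :=
      add_div _ _ _
    have h3 : (N:ℝ) * A / opt N ≤ (N:ℝ) * A / ((N:ℝ) - 1) := by
      apply div_le_div_of_nonneg_left (by positivity) hNpos hopt1
    have h4 : m N / opt N ≤ 2 := by
      rw [div_le_iff₀ hoptpos]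
      linarith
    have h5 : (N:ℝ) * A / ((N:ℝ) - 1) = A + A / ((N:ℝ) - 1) := by
      field_simp
      ring
    constructor
    · calc laru N / opt N ≤ ((N:ℝ) * A + m N) / opt N := h1
        _ = (N:ℝ) * A / opt N + m N / opt N := h2
        _ ≤ (N:ℝ) * A / ((N:ℝ) - 1) + 2 := by linarith
        _ = A + A / ((N:ℝ) - 1) + 2 := by rw [h5]
    · exact div_nonneg (hlaru_nonneg N) hoptpos.le
  have hbound : ∀ᶠ N : ℕ in atTop, laru N / opt N ≤ A + A / ((N:ℝ) - 1) + 2 := by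
    filter_upwards [eventually_ge_atTop 2] with N hN using (key N hN).1
  have hnn : ∀ᶠ N : ℕ in atTop, (0:ℝ) ≤ laru N / opt N := by
    filter_upwards [eventually_ge_atTop 2] with N hN using (key N hN).2
  have h0 : Tendsto (fun N : ℕ => (N:ℝ) - 1) atTop atTop := by
    have h' := tendsto_atTop_add_const_right atTop (-1 : ℝ)
      (tendsto_natCast_atTop_atTop (R := ℝ))
    exact h'.congr (fun x => by ring)
  have hdiv : Tendsto (fun N : ℕ => A / ((N:ℝ) - 1)) atTop (𝓝 0) :=
    Tendsto.div_atTop tendsto_const_nhds h0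
  have htend : Tendsto (fun N : ℕ => A + A / ((N:ℝ) - 1) + 2) atTop (𝓝 (A + 0 + 2)) :=
    Tendsto.add_const 2 (Tendsto.const_add A hdiv)
  have hcob : IsCoboundedUnder (· ≤ ·) atTop (fun N : ℕ => laru N / opt N) :=
    isCoboundedUnder_le_of_eventually_le atTop hnn
  have hbdd : IsBoundedUnder (· ≤ ·) atTop (fun N : ℕ => A + A / ((N:ℝ) - 1) + 2) :=
    htend.isBoundedUnder_le
  calc Filter.limsup (fun N : ℕ => laru N / opt N) Filter.atTop
      ≤ Filter.limsup (fun N : ℕ => A + A / ((N:ℝ) - 1) + 2) Filter.atTop :=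
        limsup_le_limsup hbound hcob hbdd
    _ = A + 0 + 2 := htend.limsup_eq
    _ = A + 2 := by ring
end

section
/- LARU is 1-consistent: if all next-request-time predictions are exactly correct, then LARU never triggers a prediction-induced miss, its confidence parameter λ remains 1 throughout, and it incurs exactly the same number of cache misses as the offline optimal OPT on every request sequence. -/
/-- Number of cache misses of a cache-contents trajectory `C` on the first `n`
requests of `σ`. -/
def missCount {α : Type*} [DecidableEq α] (σ : ℕ → α) (C : ℕ → Finset α) (n : ℕ) : ℕ :=
  ((Finset.range n).filter (fun s => σ s ∉ C s)).card

/-- The offline optimal number of misses on the first `n` requests of `σ` with cache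
size `k`: the minimum of `missCount` over all demand-paging cache trajectories
(starting empty, at most `k` items, only adding requested items, and loading each
requested item). -/
noncomputable def optCost {α : Type*} [DecidableEq α] (σ : ℕ → α) (k n : ℕ) : ℕ :=
  sInf {c : ℕ | ∃ D : ℕ → Finset α, D 0 = ∅ ∧ (∀ s, (D s).card ≤ k) ∧
    (∀ s, D (s + 1) ⊆ D s ∪ {σ s}) ∧ (∀ s, σ s ∈ D (s + 1)) ∧ c = missCount σ D n}


section Aux
set_option linter.unusedSectionVars false

variable {α : Type*} [DecidableEq α] {σ : ℕ → α} {s m : ℕ} {x y : α}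

lemma nextReq_le (h : s ≤ m) (h2 : σ m = x) : nextReq σ s x ≤ (m : ℕ∞) :=
  sInf_le ⟨m, rfl, h, h2⟩

lemma le_nextReq : (s : ℕ∞) ≤ nextReq σ s x := by
  apply le_sInf
  rintro n ⟨m, rfl, hm, -⟩
  exact_mod_cast hm

lemma nextReq_spec (h : nextReq σ s x ≠ ⊤) :
    ∃ m : ℕ, nextReq σ s x = (m : ℕ∞) ∧ s ≤ m ∧ σ m = x := by
  have hne : ∃ m : ℕ, s ≤ m ∧ σ m = x := by
    by_contra hc
    push_neg at hc
    apply h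
    rw [nextReq, sInf_eq_top]
    rintro n ⟨m, rfl, hm, hx⟩
    exact absurd hx (hc m hm)
  set N := {m : ℕ | s ≤ m ∧ σ m = x} with hN
  have hNne : N.Nonempty := hne
  have hmem := Nat.sInf_mem hNne
  refine ⟨sInf N, le_antisymm (nextReq_le hmem.1 hmem.2) ?_, hmem.1, hmem.2⟩
  apply le_sInf
  rintro n ⟨m, rfl, hm, hx⟩
  exact_mod_cast Nat.sInf_le (show m ∈ N from ⟨hm, hx⟩)

lemma nextReq_self : nextReq σ s (σ s) = (s : ℕ∞) :=
  le_antisymm (nextReq_le le_rfl rfl) le_nextReq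

lemma nextReq_eq_self_iff : nextReq σ s x = (s : ℕ∞) ↔ σ s = x := by
  constructor
  · intro h
    obtain ⟨m, hm, h1, h2⟩ := nextReq_spec (show nextReq σ s x ≠ ⊤ by rw [h]; simp)
    rw [h] at hm
    have : s = m := by exact_mod_cast hm
    subst this; exact h2
  · rintro rfl; exact nextReq_self

lemma nextReq_tie (h : nextReq σ s x = nextReq σ s y) (ht : nextReq σ s x ≠ ⊤) : x = y := by
  obtain ⟨m, hm, h1, h2⟩ := nextReq_spec ht
  obtain ⟨m', hm', h1', h2'⟩ := nextReq_spec (h ▸ ht)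
  rw [hm, hm'] at h
  have : m = m' := by exact_mod_cast h
  subst this
  rw [← h2, ← h2']

lemma nextReq_succ (hne : σ s ≠ x) : nextReq σ (s + 1) x = nextReq σ s x := by
  unfold nextReq
  congr 1
  ext n
  constructor
  · rintro ⟨m, rfl, hm, hx⟩; exact ⟨m, rfl, le_trans (Nat.le_succ s) hm, hx⟩
  · rintro ⟨m, rfl, hm, hx⟩
    refine ⟨m, rfl, ?_, hx⟩
    rcases Nat.lt_or_ge s m with h | h
    · exact h
    · exact absurd (hx ▸ congrArg σ (le_antisymm hm h).symm ▸ hx) (by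
        have : m = s := le_antisymm h hm
        subst this; exact fun _ => hne hx)

lemma missCount_succ (D : ℕ → Finset α) (n : ℕ) :
    missCount σ D (n + 1) = missCount σ D n + (if σ n ∈ D n then 0 else 1) := by
  unfold missCount
  rw [Finset.range_add_one, Finset.filter_insert]
  by_cases h : σ n ∈ D n
  · simp [h]
  · rw [if_pos h]; simp [h]

lemma missCount_congr {D D' : ℕ → Finset α} (n : ℕ) (h : ∀ s < n, D s = D' s) :
    missCount σ D n = missCount σ D' n := by
  unfold missCount
  congr 1
  apply Finset.filter_congr
  intro s hs
  rw [h s (Finset.mem_range.1 hs)]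

lemma missCount_mono {D D' : ℕ → Finset α} (n : ℕ) (h : ∀ s, D s ⊆ D' s) :
    missCount σ D' n ≤ missCount σ D n := by
  apply Finset.card_le_card
  intro s hs
  simp only [Finset.mem_filter] at *
  exact ⟨hs.1, fun hc => hs.2 (h s hc)⟩

def Valid (σ : ℕ → α) (k : ℕ) (D : ℕ → Finset α) : Prop :=
  D 0 = ∅ ∧ (∀ s, (D s).card ≤ k) ∧ (∀ s, D (s + 1) ⊆ D s ∪ {σ s}) ∧ (∀ s, σ s ∈ D (s + 1))

def Lazy (σ : ℕ → α) (k : ℕ) (D : ℕ → Finset α) : Prop :=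
  D 0 = ∅ ∧ ∀ s,
    (σ s ∈ D s → D (s + 1) = D s) ∧
    (σ s ∉ D s → (D s).card < k → D (s + 1) = insert (σ s) (D s)) ∧
    (σ s ∉ D s → (D s).card = k → ∃ v ∈ D s, D (s + 1) = insert (σ s) (D s \ {v}))

lemma Lazy.card_le {k : ℕ} {D : ℕ → Finset α} (hD : Lazy σ k D) : ∀ s, (D s).card ≤ k := by
  intro s
  induction s with
  | zero => simp [hD.1]
  | succ s ih =>
    obtain ⟨h1, h2, h3⟩ := hD.2 s
    by_cases hm : σ s ∈ D s
    · rw [h1 hm]; exact ih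
    · rcases lt_or_eq_of_le ih with hlt | heq
      · rw [h2 hm hlt]
        exact le_trans (Finset.card_insert_le _ _) hlt
      · obtain ⟨v, hv, he⟩ := h3 hm heq
        rw [he, Finset.card_insert_of_notMem (by simp [hm]), Finset.sdiff_singleton_eq_erase,
          Finset.card_erase_of_mem hv, heq]
        have h1k : 1 ≤ k := heq ▸ Finset.card_pos.2 ⟨v, hv⟩
        omega

lemma Lazy.valid {k : ℕ} {D : ℕ → Finset α} (hD : Lazy σ k D) : Valid σ k D := by
  refine ⟨hD.1, hD.card_le, fun s => ?_, fun s => ?_⟩ <;> {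
    obtain ⟨h1, h2, h3⟩ := hD.2 s
    by_cases hm : σ s ∈ D s
    · rw [h1 hm]; first | (exact Finset.subset_union_left) | exact hm
    · rcases lt_or_eq_of_le (hD.card_le s) with hlt | heq
      · rw [h2 hm hlt]
        first
          | (intro a ha; simp at ha ⊢; tauto)
          | exact Finset.mem_insert_self _ _
      · obtain ⟨v, hv, he⟩ := h3 hm heq
        rw [he]
        first
          | (intro a ha; simp at ha ⊢; tauto)
          | exact Finset.mem_insert_self _ _ }

open Classical in
noncomputable def lazify (σ : ℕ → α) (k : ℕ) (D : ℕ → Finset α) : ℕ → Finset α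
  | 0 => ∅
  | s + 1 =>
    let E := lazify σ k D s
    if σ s ∈ E then E
    else if E.card < k then insert (σ s) E
    else insert (σ s)
      (E \ {if h : (E \ D (s + 1)).Nonempty then h.choose else σ s})

lemma lazify_spec {k : ℕ} {D : ℕ → Finset α} (hD : Valid σ k D) :
    Lazy σ k (lazify σ k D) ∧ ∀ s, D s ⊆ lazify σ k D s := by
  obtain ⟨hD0, hDcard, hDsub, hDmem⟩ := hD
  set E := lazify σ k D with hE
  have key : ∀ s, D s ⊆ E s ∧ (E s).card ≤ k := by
    intro s
    induction s with
    | zero => simp [hE, lazify, hD0]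
    | succ s ih =>
      have hstep : E (s + 1) = if σ s ∈ E s then E s
          else if (E s).card < k then insert (σ s) (E s)
          else insert (σ s)
            (E s \ {if h : (E s \ D (s + 1)).Nonempty then h.choose else σ s}) := rfl
      by_cases hm : σ s ∈ E s
      · rw [hstep, if_pos hm]
        refine ⟨fun a ha => ?_, ih.2⟩
        rcases Finset.mem_union.1 (hDsub s (show a ∈ D (s+1) from ha)) with h | h
        · exact ih.1 h
        · rw [Finset.mem_singleton.1 h]; exact hm
      · rw [hstep, if_neg hm]
        rcases lt_or_eq_of_le ih.2 with hlt | heq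
        · rw [if_pos hlt]
          refine ⟨fun a ha => ?_, le_trans (Finset.card_insert_le _ _) hlt⟩
          rcases Finset.mem_union.1 (hDsub s ha) with h | h
          · exact Finset.mem_insert_of_mem (ih.1 h)
          · rw [Finset.mem_singleton.1 h]; exact Finset.mem_insert_self _ _
        · rw [if_neg (by omega)]
          have hne : (E s \ D (s + 1)).Nonempty := by
            rw [Finset.sdiff_nonempty]
            intro hsub
            have : (E s).card < (D (s+1)).card := by
              apply Finset.card_lt_card
              refine ⟨hsub, fun hsub2 => hm (hsub2 (hDmem s))⟩
            have := hDcard (s+1); omega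
          rw [dif_pos hne]
          have hv := hne.choose_spec
          rw [Finset.mem_sdiff] at hv
          constructor
          · intro a ha
            rcases Finset.mem_union.1 (hDsub s ha) with h | h
            · apply Finset.mem_insert_of_mem
              rw [Finset.mem_sdiff]
              exact ⟨ih.1 h, fun hc => hv.2 (Finset.mem_singleton.1 hc ▸ ha)⟩
            · rw [Finset.mem_singleton.1 h]; exact Finset.mem_insert_self _ _
          · rw [Finset.card_insert_of_notMem (by simp [hm]),
              Finset.sdiff_singleton_eq_erase, Finset.card_erase_of_mem hv.1]
            have : 1 ≤ (E s).card := Finset.card_pos.2 ⟨_, hv.1⟩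
            omega
  refine ⟨⟨rfl, fun s => ?_⟩, fun s => (key s).1⟩
  have hstep : E (s + 1) = if σ s ∈ E s then E s
      else if (E s).card < k then insert (σ s) (E s)
      else insert (σ s)
        (E s \ {if h : (E s \ D (s + 1)).Nonempty then h.choose else σ s}) := rfl
  refine ⟨fun hm => by rw [hstep, if_pos hm], fun hm hlt => by rw [hstep, if_neg hm, if_pos hlt],
    fun hm hcard => ?_⟩
  have hne : (E s \ D (s + 1)).Nonempty := by
    rw [Finset.sdiff_nonempty]
    intro hsub
    have : (E s).card < (D (s+1)).card := by
      apply Finset.card_lt_card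
      refine ⟨hsub, fun hsub2 => hm (hsub2 (hDmem s))⟩
    have := hDcard (s+1); omega
  have hv := hne.choose_spec
  rw [Finset.mem_sdiff] at hv
  refine ⟨hne.choose, hv.1, ?_⟩
  rw [hstep, if_neg hm, if_neg (by omega), dif_pos hne]

def BeladyStep (σ : ℕ → α) (k : ℕ) (C : ℕ → Finset α) (t : ℕ) : Prop :=
  (σ t ∈ C t → C (t + 1) = C t) ∧
  (σ t ∉ C t → (C t).card < k → C (t + 1) = insert (σ t) (C t)) ∧
  (σ t ∉ C t → (C t).card = k → ∃ z ∈ C t,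
    (∀ y ∈ C t, nextReq σ (t + 1) y ≤ nextReq σ (t + 1) z) ∧
    C (t + 1) = insert (σ t) (C t \ {z}))

lemma belady_lazy {k : ℕ} {C : ℕ → Finset α} (hC0 : C 0 = ∅)
    (hB : ∀ t, BeladyStep σ k C t) : Lazy σ k C := by
  refine ⟨hC0, fun s => ⟨(hB s).1, (hB s).2.1, fun hm hc => ?_⟩⟩
  obtain ⟨z, hz, -, he⟩ := (hB s).2.2 hm hc
  exact ⟨z, hz, he⟩

lemma card_swap {A : Finset α} {x z : α} (hx : x ∉ A) (hz : z ∈ A) :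
    (insert x (A \ {z})).card = A.card := by
  rw [Finset.card_insert_of_notMem (by simp [hx]), Finset.sdiff_singleton_eq_erase,
    Finset.card_erase_of_mem hz]
  have : 1 ≤ A.card := Finset.card_pos.2 ⟨z, hz⟩
  omega

section helpers
variable {A : Finset α} {x z v w : α}

lemma G1 (hw : w ∉ A) (hz : z ∈ A) (hv : v ∈ A) (hvz : v ≠ z) (hwv : w ≠ v) (hwz : w ≠ z) :
    insert v ((insert w (A \ {v})) \ {z}) = insert w (A \ {z}) := by
  ext a
  by_cases h2 : a = z <;> by_cases h3 : a = v <;> by_cases h4 : a = w <;>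
    subst_vars <;> simp_all

lemma G2 (hx : x ∉ A) (hw : w ∉ A) (hz : z ∈ A) (hv : v ∈ A)
    (hvz : v ≠ z) (hxv : x ≠ v) (hwz : w ≠ z) (hwv : w ≠ v) (hxw : x ≠ w) (hxz : x ≠ z) :
    insert w ((insert x (A \ {z})) \ {v}) = insert x ((insert w (A \ {v})) \ {z}) := by
  ext a
  by_cases h1 : a = x <;> by_cases h2 : a = z <;> by_cases h3 : a = v <;> by_cases h4 : a = w <;>
    subst_vars <;> simp_all

lemma G3 (hx : x ∉ A) (hz : z ∈ A) : insert z ((insert x (A \ {z})) \ {x}) = A := by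
  ext a
  by_cases h1 : a = x <;> by_cases h2 : a = z <;> subst_vars <;> simp_all

lemma G4 (hx : x ∉ A) : (insert x (A \ {z})) \ {x} = A \ {z} := by
  ext a
  by_cases h1 : a = x <;> by_cases h2 : a = z <;> subst_vars <;> simp_all

lemma G5 (hx : x ∉ A) : (insert x (A \ {z})) ∩ A = A \ {z} := by
  ext a
  by_cases h1 : a = x <;> by_cases h2 : a = z <;> subst_vars <;> simp_all

lemma G6 (hv : v ∈ A) (hvz : v ≠ z) (hwv : w ≠ v) :
    (A \ {z}) \ (insert w (A \ {v})) = {v} := by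
  ext a
  by_cases h2 : a = z <;> by_cases h3 : a = v <;> by_cases h4 : a = w <;>
    subst_vars <;> simp_all

lemma G7 (hx : x ∉ A) : (insert x (A \ {z})) \ A = {x} := by
  ext a
  by_cases h1 : a = x <;> by_cases h2 : a = z <;> subst_vars <;> simp_all

lemma G8 (hx : x ∉ A) (hxw : x ≠ w) :
    (insert x (A \ {z})) \ (insert w (A \ {z})) = {x} := by
  ext a
  by_cases h1 : a = x <;> by_cases h2 : a = z <;> by_cases h4 : a = w <;>
    subst_vars <;> simp_all

end helpers

open Classical in
noncomputable def hpick (σ : ℕ → α) (D : ℕ → Finset α) (s : ℕ) (E : Finset α) : α :=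
  if h : ((E ∩ D s) \ D (s + 1)).Nonempty then h.choose
  else if h2 : (E \ D (s + 1)).Nonempty then h2.choose else σ s

lemma hpick_eq1 {D : ℕ → Finset α} {s : ℕ} {E : Finset α} {v : α}
    (h : (E ∩ D s) \ D (s + 1) = {v}) : hpick σ D s E = v := by
  have hne : ((E ∩ D s) \ D (s + 1)).Nonempty := by
    rw [h]; exact ⟨v, Finset.mem_singleton_self v⟩
  unfold hpick
  rw [dif_pos hne]
  have h3 : Exists.choose hne ∈ ({v} : Finset α) := by
    rw [← h]; exact hne.choose_spec
  exact Finset.mem_singleton.1 h3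

lemma hpick_eq2 {D : ℕ → Finset α} {s : ℕ} {E : Finset α} {x : α}
    (h1 : (E ∩ D s) \ D (s + 1) = ∅) (h2 : E \ D (s + 1) = {x}) : hpick σ D s E = x := by
  have hne : (E \ D (s + 1)).Nonempty := by rw [h2]; exact ⟨x, Finset.mem_singleton_self x⟩
  unfold hpick
  rw [dif_neg (by rw [h1]; simp), dif_pos hne]
  have h3 : Exists.choose hne ∈ ({x} : Finset α) := by
    rw [← h2]; exact hne.choose_spec
  exact Finset.mem_singleton.1 h3

lemma hpick_mem {D : ℕ → Finset α} {s : ℕ} {E : Finset α}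
    (h : (E \ D (s + 1)).Nonempty) : hpick σ D s E ∈ E := by
  unfold hpick
  by_cases h1 : ((E ∩ D s) \ D (s + 1)).Nonempty
  · rw [dif_pos h1]
    exact (Finset.mem_inter.1 (Finset.mem_sdiff.1 h1.choose_spec).1).1
  · rw [dif_neg h1, dif_pos h]
    exact (Finset.mem_sdiff.1 h.choose_spec).1

noncomputable def hstepF (σ : ℕ → α) (D : ℕ → Finset α) (s : ℕ) (E : Finset α) : Finset α :=
  if E = D s then D (s + 1)
  else if σ s ∈ E then E
  else insert (σ s) (E \ {hpick σ D s E})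

noncomputable def hybAux (σ : ℕ → α) (D : ℕ → Finset α) (t : ℕ) (A : Finset α) : ℕ → Finset α
  | 0 => A
  | j + 1 => hstepF σ D (t + 1 + j) (hybAux σ D t A j)

noncomputable def hybrid (σ : ℕ → α) (D : ℕ → Finset α) (t : ℕ) (A : Finset α) (s : ℕ) :
    Finset α :=
  if s ≤ t then D s else hybAux σ D t A (s - (t + 1))

lemma hybrid_le {D : ℕ → Finset α} {t : ℕ} {A : Finset α} {s : ℕ} (h : s ≤ t) :
    hybrid σ D t A s = D s := if_pos h

lemma hybrid_t1 {D : ℕ → Finset α} {t : ℕ} {A : Finset α} :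
    hybrid σ D t A (t + 1) = A := by
  unfold hybrid
  rw [if_neg (by omega), Nat.sub_self]
  rfl

lemma hybrid_step {D : ℕ → Finset α} {t : ℕ} {A : Finset α} {s : ℕ} (h : t + 1 ≤ s) :
    hybrid σ D t A (s + 1) = hstepF σ D s (hybrid σ D t A s) := by
  unfold hybrid
  rw [if_neg (by omega), if_neg (by omega)]
  have h1 : s + 1 - (t + 1) = (s - (t + 1)) + 1 := by omega
  rw [h1]
  show hstepF σ D (t + 1 + (s - (t + 1))) _ = _
  have h2 : t + 1 + (s - (t + 1)) = s := by omega
  rw [h2]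

def ExInv (σ : ℕ → α) (k : ℕ) (D D' : ℕ → Finset α) (z : α) (s : ℕ) : Prop :=
  (D' s = D s ∧ missCount σ D' s ≤ missCount σ D s) ∨
  (∃ x, x ∈ D' s ∧ x ∉ D s ∧ z ∈ D s ∧ z ∉ D' s ∧
    D' s = insert x (D s \ {z}) ∧ (D s).card = k ∧
    (missCount σ D' s + 1 ≤ missCount σ D s ∨
      (missCount σ D' s ≤ missCount σ D s ∧
        (nextReq σ s x < nextReq σ s z ∨ nextReq σ s z = ⊤))))

lemma exInv_step {k : ℕ} {D D' : ℕ → Finset α} {z : α} {s : ℕ}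
    (hD : Lazy σ k D)
    (hst : D' (s + 1) = hstepF σ D s (D' s))
    (hinv : ExInv σ k D D' z s) : ExInv σ k D D' z (s + 1) := by
  obtain ⟨L1, L2, L3⟩ := hD.2 s
  unfold hstepF at hst
  rcases hinv with ⟨heq, hcost⟩ | ⟨x, hxD', hxD, hzD, hzD', hshape, hcard, hcost⟩
  · -- synced
    left
    rw [if_pos heq] at hst
    refine ⟨hst, ?_⟩
    rw [missCount_succ, missCount_succ, heq]
    by_cases hm : σ s ∈ D s <;> simp [hm] <;> omega
  · -- differing
    have hxz : x ≠ z := fun h => hxD (h ▸ hzD)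
    have hED : D' s ≠ D s := fun h => hxD (h ▸ hxD')
    rw [if_neg hED] at hst
    have hle : missCount σ D' s ≤ missCount σ D s := by
      rcases hcost with h | ⟨h, -⟩
      · omega
      · exact h
    by_cases hsx : σ s = x
    · -- request hits the extra item of D'
      subst hsx
      have hm' : σ s ∈ D' s := hxD'
      rw [if_pos hm'] at hst
      obtain ⟨v, hv, hD1⟩ := L3 hxD hcard
      have hvs : v ≠ σ s := fun h => hxD (h ▸ hv)
      have hmc' : missCount σ D' (s + 1) = missCount σ D' s := by
        rw [missCount_succ, if_pos hm']
        rfl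
      have hmc : missCount σ D (s + 1) = missCount σ D s + 1 := by
        rw [missCount_succ, if_neg hxD]
      by_cases hvz : v = z
      · subst hvz
        left
        have h2 : D (s + 1) = D' s := by rw [hD1, hshape]
        exact ⟨hst.trans h2.symm, by omega⟩
      · right
        refine ⟨v, ?_, ?_, ?_, ?_, ?_, ?_, ?_⟩
        · rw [hst, hshape]
          exact Finset.mem_insert_of_mem (Finset.mem_sdiff.2 ⟨hv, by simp [hvz]⟩)
        · rw [hD1]; simp [hvs]
        · rw [hD1]
          exact Finset.mem_insert_of_mem (Finset.mem_sdiff.2 ⟨hzD, by simp [Ne.symm hvz]⟩)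
        · rw [hst]; exact hzD'
        · rw [hst, hshape, hD1]
          exact (G1 hxD hzD hv hvz hvs.symm hxz).symm
        · rw [hD1, card_swap hxD hv]; exact hcard
        · left; omega
    · by_cases hsz : σ s = z
      · -- request hits the item D' dropped: must be banked, resync
        have hm' : σ s ∉ D' s := by rw [hsz]; exact hzD'
        rw [if_neg hm'] at hst
        have hmD : σ s ∈ D s := by rw [hsz]; exact hzD
        have hDs1 : D (s + 1) = D s := L1 hmD
        have hbank : missCount σ D' s + 1 ≤ missCount σ D s := by
          rcases hcost with h | ⟨-, h | h⟩
          · exact h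
          · exfalso
            have h2 : nextReq σ s z = (s : ℕ∞) := by rw [← hsz]; exact nextReq_self
            rw [h2] at h
            exact absurd le_nextReq h.not_ge
          · exfalso
            have h2 : nextReq σ s z = (s : ℕ∞) := by rw [← hsz]; exact nextReq_self
            rw [h2] at h
            exact absurd h (by simp)
        have e1 : (D' s ∩ D s) \ D (s + 1) = ∅ := by
          rw [hDs1]
          exact Finset.sdiff_eq_empty_iff_subset.2 Finset.inter_subset_right
        have e2 : D' s \ D (s + 1) = {x} := by rw [hDs1, hshape]; exact G7 hxD
        rw [hpick_eq2 e1 e2] at hst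
        left
        have h2 : D' (s + 1) = D s := by
          rw [hst, hshape, hsz]; exact G3 hxD hzD
        refine ⟨h2.trans hDs1.symm, ?_⟩
        rw [missCount_succ, missCount_succ, if_neg hm', if_pos hmD]
        omega
      · by_cases hsD : σ s ∈ D s
        · -- hit for both
          have hm' : σ s ∈ D' s := by
            rw [hshape]
            exact Finset.mem_insert_of_mem (Finset.mem_sdiff.2 ⟨hsD, by simp [hsz]⟩)
          rw [if_pos hm'] at hst
          have hDs1 : D (s + 1) = D s := L1 hsD
          right
          refine ⟨x, by rw [hst]; exact hxD', by rw [hDs1]; exact hxD,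
            by rw [hDs1]; exact hzD, by rw [hst]; exact hzD',
            by rw [hst, hDs1]; exact hshape, by rw [hDs1]; exact hcard, ?_⟩
          have hmc' : missCount σ D' (s + 1) = missCount σ D' s := by
            rw [missCount_succ, if_pos hm']
            rfl
          have hmc : missCount σ D (s + 1) = missCount σ D s := by
            rw [missCount_succ, if_pos hsD]
            rfl
          rcases hcost with h | ⟨h1, h2⟩
          · left; omega
          · right
            refine ⟨by omega, ?_⟩
            rw [nextReq_succ hsx, nextReq_succ hsz]
            exact h2
        · -- miss for both
          have hm' : σ s ∉ D' s := by rw [hshape]; simp [hsx, hsD]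
          rw [if_neg hm'] at hst
          obtain ⟨v, hv, hD1⟩ := L3 hsD hcard
          have hvs : v ≠ σ s := fun h => hsD (h ▸ hv)
          have hxv : x ≠ v := fun h => hxD (h ▸ hv)
          have hmc' : missCount σ D' (s + 1) = missCount σ D' s + 1 := by
            rw [missCount_succ, if_neg hm']
          have hmc : missCount σ D (s + 1) = missCount σ D s + 1 := by
            rw [missCount_succ, if_neg hsD]
          by_cases hvz : v = z
          · subst hvz
            have e1 : (D' s ∩ D s) \ D (s + 1) = ∅ := by
              rw [hD1, hshape, G5 hxD]
              exact Finset.sdiff_eq_empty_iff_subset.2 (Finset.subset_insert _ _)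
            have e2 : D' s \ D (s + 1) = {x} := by
              rw [hD1, hshape]
              exact G8 hxD (Ne.symm hsx)
            rw [hpick_eq2 e1 e2] at hst
            left
            have h2 : D' (s + 1) = D (s + 1) := by rw [hst, hshape, G4 hxD, hD1]
            exact ⟨h2, by omega⟩
          · have e1 : (D' s ∩ D s) \ D (s + 1) = {v} := by
              rw [hD1, hshape, G5 hxD]
              exact G6 hv hvz hvs.symm
            rw [hpick_eq1 e1] at hst
            right
            refine ⟨x, ?_, ?_, ?_, ?_, ?_, ?_, ?_⟩
            · rw [hst]
              exact Finset.mem_insert_of_mem (Finset.mem_sdiff.2 ⟨hxD', by simp [hxv]⟩)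
            · rw [hD1]; simp [Ne.symm hsx, hxD]
            · rw [hD1]
              exact Finset.mem_insert_of_mem (Finset.mem_sdiff.2 ⟨hzD, by simp [Ne.symm hvz]⟩)
            · rw [hst]; simp [Ne.symm hsz, hzD']
            · rw [hst, hshape, hD1]
              exact G2 hxD hsD hzD hv hvz hxv hsz hvs.symm (Ne.symm hsx) hxz
            · rw [hD1, card_swap hsD hv]; exact hcard
            · rcases hcost with h | ⟨h1, h2⟩
              · left; omega
              · right
                refine ⟨by omega, ?_⟩
                rw [nextReq_succ hsx, nextReq_succ hsz]
                exact h2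

lemma exchange {k : ℕ} {CB D : ℕ → Finset α} (t : ℕ)
    (hB : ∀ u, BeladyStep σ k CB u)
    (hD : Lazy σ k D) (hag : ∀ s ≤ t, D s = CB s) :
    ∃ D', Lazy σ k D' ∧ (∀ s ≤ t + 1, D' s = CB s) ∧
      ∀ m, missCount σ D' m ≤ missCount σ D m := by
  obtain ⟨hDhit, hDfill, hDev⟩ := hD.2 t
  have hDt : D t = CB t := hag t le_rfl
  by_cases hm : σ t ∈ CB t
  · refine ⟨D, hD, fun s hs => ?_, fun m => le_rfl⟩
    rcases Nat.lt_or_ge s (t + 1) with h | h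
    · exact hag s (by omega)
    · have : s = t + 1 := by omega
      subst this
      rw [hDhit (by rw [hDt]; exact hm), hDt, (hB t).1 hm]
  · have hcardle : (CB t).card ≤ k := by rw [← hDt]; exact hD.card_le t
    rcases lt_or_eq_of_le hcardle with hlt | hcard
    · refine ⟨D, hD, fun s hs => ?_, fun m => le_rfl⟩
      rcases Nat.lt_or_ge s (t + 1) with h | h
      · exact hag s (by omega)
      · have : s = t + 1 := by omega
        subst this
        rw [hDfill (by rw [hDt]; exact hm) (by rw [hDt]; exact hlt), hDt, (hB t).2.1 hm hlt]
    · obtain ⟨z, hzC, hmax, hCt1⟩ := (hB t).2.2 hm hcard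
      obtain ⟨v, hv, hDt1⟩ := hDev (by rw [hDt]; exact hm) (by rw [hDt]; exact hcard)
      have hv' : v ∈ CB t := by rw [← hDt]; exact hv
      have hσv : σ t ≠ v := fun h => hm (h ▸ hv')
      have hσz : σ t ≠ z := fun h => hm (h ▸ hzC)
      have hDt1' : D (t + 1) = insert (σ t) (CB t \ {v}) := by rw [hDt1, hDt]
      by_cases hvz : v = z
      · subst hvz
        refine ⟨D, hD, fun s hs => ?_, fun m => le_rfl⟩
        rcases Nat.lt_or_ge s (t + 1) with h | h
        · exact hag s (by omega)
        · have : s = t + 1 := by omega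
          subst this
          rw [hDt1', hCt1]
      · -- genuine divergence: use the hybrid schedule
        have hzv : z ≠ v := Ne.symm hvz
        set D' := hybrid σ D t (CB (t + 1)) with hD'def
        have hag' : ∀ s ≤ t, D' s = D s := fun s hs => hybrid_le hs
        have ht1 : D' (t + 1) = CB (t + 1) := hybrid_t1
        have hstep' : ∀ s, t + 1 ≤ s → D' (s + 1) = hstepF σ D s (D' s) :=
          fun s hs => hybrid_step hs
        have base : ExInv σ k D D' z (t + 1) := by
          right
          have hcost0 : missCount σ D' (t + 1) = missCount σ D (t + 1) :=
            missCount_congr _ (fun s hs => hag' s (by omega))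
          refine ⟨v, ?_, ?_, ?_, ?_, ?_, ?_, Or.inr ⟨le_of_eq hcost0, ?_⟩⟩
          · rw [ht1, hCt1]
            exact Finset.mem_insert_of_mem (Finset.mem_sdiff.2 ⟨hv', by simp [hvz]⟩)
          · rw [hDt1']; simp [Ne.symm hσv]
          · rw [hDt1']
            exact Finset.mem_insert_of_mem (Finset.mem_sdiff.2 ⟨hzC, by simp [hzv]⟩)
          · rw [ht1, hCt1]; simp [Ne.symm hσz]
          · rw [ht1, hCt1, hDt1']
            exact (G1 hm hzC hv' hvz hσv hσz).symm
          · rw [hDt1', card_swap hm hv']; exact hcard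
          · by_cases htop : nextReq σ (t + 1) z = ⊤
            · exact Or.inr htop
            · refine Or.inl (lt_of_le_of_ne (hmax v hv') (fun he => hvz (nextReq_tie he ?_)))
              rw [he]; exact htop
        have inv : ∀ j, ExInv σ k D D' z (t + 1 + j) := by
          intro j
          induction j with
          | zero => exact base
          | succ j ih => exact exInv_step hD (hstep' (t + 1 + j) (by omega)) ih
        have hcost : ∀ m, missCount σ D' m ≤ missCount σ D m := by
          intro m
          rcases Nat.lt_or_ge m (t + 2) with hh | hh
          · exact le_of_eq (missCount_congr _ (fun s hs => hag' s (by omega)))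
          · obtain ⟨j, rfl⟩ : ∃ j, m = t + 1 + j := ⟨m - (t + 1), by omega⟩
            rcases inv j with ⟨-, h⟩ | ⟨x, -, -, -, -, -, -, hc⟩
            · exact h
            · rcases hc with h | ⟨h, -⟩ <;> omega
        refine ⟨D', ?_, ?_, hcost⟩
        · -- D' is lazy
          refine ⟨by rw [hag' 0 (by omega)]; exact hD.1, fun s => ?_⟩
          rcases Nat.lt_or_ge s t with hs | hs
          · have e1 : D' s = D s := hag' s (by omega)
            have e2 : D' (s + 1) = D (s + 1) := hag' (s + 1) (by omega)
            rw [e1, e2]; exact hD.2 s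
          rcases Nat.lt_or_ge s (t + 1) with hs' | hs'
          · have hst : s = t := by omega
            subst hst
            have e1 : D' s = D s := hag' s le_rfl
            refine ⟨fun hmm => absurd hmm (by rw [e1, hDt]; exact hm),
              fun hmm hltc => ?_, fun hmm hcc => ?_⟩
            · rw [e1, hDt, hcard] at hltc; omega
            · refine ⟨z, by rw [e1, hDt]; exact hzC, ?_⟩
              rw [ht1, hCt1, e1, hDt]
          · -- s ≥ t + 1
            obtain ⟨j, rfl⟩ : ∃ j, s = t + 1 + j := ⟨s - (t + 1), by omega⟩
            have hstj := hstep' (t + 1 + j) (by omega)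
            rcases inv j with ⟨heq, -⟩ | ⟨x, hxD', hxD, hzD, hzD', hshape, hcardD, -⟩
            · rw [heq] at hstj ⊢
              unfold hstepF at hstj
              rw [if_pos rfl] at hstj
              rw [hstj]
              exact hD.2 (t + 1 + j)
            · have hED : D' (t + 1 + j) ≠ D (t + 1 + j) := fun h => hxD (h ▸ hxD')
              have hcard' : (D' (t + 1 + j)).card = k := by
                rw [hshape, card_swap hxD hzD]; exact hcardD
              unfold hstepF at hstj
              rw [if_neg hED] at hstj
              refine ⟨fun hmm => by rw [hstj, if_pos hmm], ?_, ?_⟩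
              · intro hmm hltc
                rw [hcard'] at hltc
                omega
              · intro hmm hcc
                rw [if_neg hmm] at hstj
                have hne : (D' (t + 1 + j) \ D (t + 1 + j + 1)).Nonempty := by
                  refine ⟨x, Finset.mem_sdiff.2 ⟨hxD', fun hc => ?_⟩⟩
                  rcases Finset.mem_union.1 ((hD.valid.2.2.1 (t + 1 + j)) hc) with h | h
                  · exact hxD h
                  · rw [Finset.mem_singleton] at h
                    exact hmm (h ▸ hxD')
                exact ⟨hpick σ D (t + 1 + j) (D' (t + 1 + j)), hpick_mem hne, hstj⟩
        · -- agreement up to t+1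
          intro s hs
          rcases Nat.lt_or_ge s (t + 1) with hh | hh
          · rw [hag' s (by omega)]; exact hag s (by omega)
          · have : s = t + 1 := by omega
            subst this
            exact ht1

lemma belady_opt {k : ℕ} {CB : ℕ → Finset α} (hB0 : CB 0 = ∅)
    (hB : ∀ u, BeladyStep σ k CB u) {D : ℕ → Finset α} (hD : Valid σ k D) (n : ℕ) :
    missCount σ CB n ≤ missCount σ D n := by
  obtain ⟨hlz, hsub⟩ := lazify_spec hD
  have key : ∀ j t (E : ℕ → Finset α), Lazy σ k E → (∀ s ≤ t, E s = CB s) →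
      n ≤ t + j → missCount σ CB n ≤ missCount σ E n := by
    intro j
    induction j with
    | zero =>
      intro t E hE hag hn
      exact le_of_eq (missCount_congr n (fun s hs => (hag s (by omega)).symm))
    | succ j ih =>
      intro t E hE hag hn
      obtain ⟨E', hE', hag', hc⟩ := exchange t hB hE hag
      exact le_trans (ih (t + 1) E' hE' hag' (by omega)) (hc n)
  have h0 : ∀ s ≤ 0, lazify σ k D s = CB s := by
    intro s hs
    have : s = 0 := by omega
    subst this
    rw [hB0]
    rfl
  exact le_trans (key n 0 _ hlz h0 (by omega)) (missCount_mono n hsub)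

lemma belady_eq_opt {k : ℕ} {CB : ℕ → Finset α} (hB0 : CB 0 = ∅)
    (hB : ∀ u, BeladyStep σ k CB u) (hval : Valid σ k CB) (n : ℕ) :
    missCount σ CB n = optCost σ k n := by
  obtain ⟨h0, h1, h2, h3⟩ := hval
  have hmem : missCount σ CB n ∈ {c : ℕ | ∃ D : ℕ → Finset α, D 0 = ∅ ∧
      (∀ s, (D s).card ≤ k) ∧ (∀ s, D (s + 1) ⊆ D s ∪ {σ s}) ∧
      (∀ s, σ s ∈ D (s + 1)) ∧ c = missCount σ D n} := ⟨CB, h0, h1, h2, h3, rfl⟩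
  refine le_antisymm ?_ (Nat.sInf_le hmem)
  obtain ⟨D, hD0, hD1, hD2, hD3, hDc⟩ := Nat.sInf_mem ⟨_, hmem⟩
  rw [optCost, hDc]
  exact belady_opt hB0 hB ⟨hD0, hD1, hD2, hD3⟩ n


end Aux

/-- LARU is 1-consistent.  The hypotheses describe an execution of
LARU (Algorithm 1) with cache `C` of size `k`, old set `O`, set `P` of items evicted
by prediction-driven evictions in the current phase, and confidence parameter `lam`
with error base `b`, where all next-request-time predictions are exactly correct
(predicted reuse equals `nextReq`).  On a hit nothing changes except that the
requested item is unmarked; on a miss with a non-full cache the item is loaded; on a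
miss with a full cache a new phase is started if `O = ∅` (resetting `O` to the cache
contents, `P` to `∅` and `lam` to `1`), then either a prediction-induced miss is
detected (the requested item is in `P`), in which case some item is evicted by the
LRU fallback and `lam` is divided by `b`, or the eviction candidate set `L` (the
whole cache when `lam = 1`, reflecting the top-`⌊lam·k⌋` LRU candidates) is used and
the item of `L` with furthest true next request is evicted.  Then: LARU never
triggers a prediction-induced miss, `lam` remains `1` throughout, and LARU incurs
exactly the same number of cache misses as the offline optimal OPT on every prefix
of the request sequence. -/
theorem laru_one_consistency
    {α : Type*} [DecidableEq α] (σ : ℕ → α) (k : ℕ) (hk : 1 ≤ k)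
    (b : ℚ) (hb : 2 ≤ b)
    (C O P : ℕ → Finset α) (lam : ℕ → ℚ)
    (hC0 : C 0 = ∅) (hO0 : O 0 = ∅) (hP0 : P 0 = ∅) (hlam0 : lam 0 = 1)
    (hhit : ∀ s, σ s ∈ C s →
      C (s + 1) = C s ∧ O (s + 1) = O s \ {σ s} ∧ P (s + 1) = P s ∧
        lam (s + 1) = lam s)
    (hfill : ∀ s, σ s ∉ C s → (C s).card < k →
      C (s + 1) = insert (σ s) (C s) ∧ O (s + 1) = O s ∧ P (s + 1) = P s ∧
        lam (s + 1) = lam s)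
    (herr : ∀ s, σ s ∉ C s → (C s).card = k →
      σ s ∈ (if O s = ∅ then (∅ : Finset α) else P s) →
      ∃ z ∈ C s, C (s + 1) = insert (σ s) (C s \ {z}) ∧
        O (s + 1) = (if O s = ∅ then C s else O s) \ {z} ∧
        P (s + 1) = (if O s = ∅ then (∅ : Finset α) else P s) ∧
        lam (s + 1) = (if O s = ∅ then (1 : ℚ) else lam s) / b)
    (hpred : ∀ s, σ s ∉ C s → (C s).card = k →
      σ s ∉ (if O s = ∅ then (∅ : Finset α) else P s) →
      ∃ L : Finset α, L ⊆ C s ∧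
        ((if O s = ∅ then (1 : ℚ) else lam s) = 1 → L = C s) ∧
        ∃ z ∈ L, (∀ y ∈ L, nextReq σ (s + 1) y ≤ nextReq σ (s + 1) z) ∧
          C (s + 1) = insert (σ s) (C s \ {z}) ∧
          O (s + 1) = (if O s = ∅ then C s else O s) \ {z} ∧
          P (s + 1) = insert z (if O s = ∅ then (∅ : Finset α) else P s) ∧
          lam (s + 1) = (if O s = ∅ then (1 : ℚ) else lam s)) :
    (∀ s, ¬ (σ s ∉ C s ∧ (C s).card = k ∧
        σ s ∈ (if O s = ∅ then (∅ : Finset α) else P s))) ∧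
      (∀ s, lam s = 1) ∧
      (∀ n, missCount σ C n = optCost σ k n) := by
  -- the key phase invariant
  have inv : ∀ s, O s ⊆ C s ∧
      (∀ z ∈ P s, ∀ y ∈ O s, nextReq σ s y < nextReq σ s z ∨ nextReq σ s z = ⊤) ∧
      (P s ≠ ∅ → (C s).card = k) ∧ lam s = 1 ∧ (C s).card ≤ k := by
    intro s
    induction s with
    | zero =>
      refine ⟨by rw [hO0, hC0], ?_, fun h => absurd hP0 h, hlam0, by simp [hC0]⟩
      intro z hz
      rw [hP0] at hz
      exact absurd hz (Finset.notMem_empty z)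
    | succ s ih =>
      obtain ⟨ihO, ihP, ihc, ihl, ihcard⟩ := ih
      have hnotP : O s ≠ ∅ → σ s ∉ P s := by
        intro hO hPmem
        obtain ⟨y, hy⟩ := Finset.nonempty_iff_ne_empty.2 hO
        rcases ihP (σ s) hPmem y hy with h | h
        · rw [nextReq_self] at h
          exact absurd le_nextReq h.not_ge
        · rw [nextReq_self] at h
          simp at h
      by_cases hm : σ s ∈ C s
      · obtain ⟨e1, e2, e3, e4⟩ := hhit s hm
        refine ⟨?_, ?_, ?_, by rw [e4, ihl], by rw [e1]; exact ihcard⟩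
        · rw [e1, e2]
          exact subset_trans (Finset.sdiff_subset) ihO
        · rw [e2, e3]
          intro z hz y hy
          have hyO : y ∈ O s := (Finset.mem_sdiff.1 hy).1
          have hys : y ≠ σ s := by
            have := (Finset.mem_sdiff.1 hy).2
            simpa using this
          have hzs : σ s ≠ z := fun he =>
            hnotP (Finset.ne_empty_of_mem hyO) (he ▸ hz)
          rw [nextReq_succ (Ne.symm hys), nextReq_succ hzs]
          exact ihP z hz y hyO
        · rw [e3, e1]; exact ihc
      · rcases Nat.lt_or_ge (C s).card k with hlt | hge
        · obtain ⟨e1, e2, e3, e4⟩ := hfill s hm hlt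
          have hPe : P s = ∅ := by
            by_contra hPe
            rw [ihc hPe] at hlt
            omega
          refine ⟨?_, ?_, ?_, by rw [e4, ihl], ?_⟩
          · rw [e1, e2]
            exact subset_trans ihO (Finset.subset_insert _ _)
          · rw [e3, hPe]
            intro z hz
            exact absurd hz (Finset.notMem_empty z)
          · rw [e3, hPe]
            intro hne
            exact absurd rfl hne
          · rw [e1, Finset.card_insert_of_notMem hm]
            omega
        · have hcard : (C s).card = k := le_antisymm ihcard hge
          have hcond : σ s ∉ (if O s = ∅ then (∅ : Finset α) else P s) := by
            split_ifs with hO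
            · exact Finset.notMem_empty _
            · exact hnotP hO
          obtain ⟨L, hLsub, hL1, z, hzL, hmax, e1, e2, e3, e4⟩ := hpred s hm hcard hcond
          have hlam1 : (if O s = ∅ then (1 : ℚ) else lam s) = 1 := by
            split_ifs
            · rfl
            · exact ihl
          have hLC : L = C s := hL1 hlam1
          subst hLC
          have hzC : z ∈ C s := hzL
          refine ⟨?_, ?_, ?_, by rw [e4, hlam1], ?_⟩
          · rw [e1, e2]
            intro a ha
            rw [Finset.mem_sdiff] at ha
            have haC : a ∈ C s := by
              rcases ha with ⟨ha1, ha2⟩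
              split_ifs at ha1 with hO
              · exact ha1
              · exact ihO ha1
            exact Finset.mem_insert_of_mem (Finset.mem_sdiff.2 ⟨haC, ha.2⟩)
          · rw [e2, e3]
            intro z' hz' y hy
            rw [Finset.mem_sdiff] at hy
            have hyC : y ∈ C s := by
              rcases hy with ⟨hy1, hy2⟩
              split_ifs at hy1 with hO
              · exact hy1
              · exact ihO hy1
            have hyz : y ≠ z := by simpa using hy.2
            rcases Finset.mem_insert.1 hz' with rfl | hz'
            · by_cases htop : nextReq σ (s + 1) z' = ⊤
              · exact Or.inr htop
              · exact Or.inl (lt_of_le_of_ne (hmax y hyC)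
                  (fun he => hyz (nextReq_tie he (by rw [he]; exact htop))))
            · have hOne : O s ≠ ∅ := by
                intro hOe
                rw [if_pos hOe] at hz'
                exact absurd hz' (Finset.notMem_empty z')
              rw [if_neg hOne] at hz'
              have hyO : y ∈ O s := by
                have := hy.1
                rwa [if_neg hOne] at this
              have hys : σ s ≠ y := fun he => hm (he ▸ hyC)
              have hzs' : σ s ≠ z' := fun he => hnotP hOne (he ▸ hz')
              rw [nextReq_succ hys, nextReq_succ hzs']
              exact ihP z' hz' y hyO
          · intro _
            rw [e1, card_swap hm hzC]
            exact hcard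
          · rw [e1, card_swap hm hzC]
            exact ihcard
  -- part 1: no prediction-induced miss
  have part1 : ∀ s, ¬ (σ s ∉ C s ∧ (C s).card = k ∧
      σ s ∈ (if O s = ∅ then (∅ : Finset α) else P s)) := by
    rintro s ⟨-, -, h3⟩
    by_cases hO : O s = ∅
    · rw [if_pos hO] at h3
      exact absurd h3 (Finset.notMem_empty _)
    · rw [if_neg hO] at h3
      obtain ⟨y, hy⟩ := Finset.nonempty_iff_ne_empty.2 hO
      rcases (inv s).2.1 (σ s) h3 y hy with h | h
      · rw [nextReq_self] at h
        exact absurd le_nextReq h.not_ge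
      · rw [nextReq_self] at h
        simp at h
  have part2 : ∀ s, lam s = 1 := fun s => (inv s).2.2.2.1
  refine ⟨part1, part2, fun n => ?_⟩
  -- C performs Belady steps
  have hB : ∀ t, BeladyStep σ k C t := by
    intro t
    refine ⟨fun hm => (hhit t hm).1, fun hm hlt => (hfill t hm hlt).1, fun hm hcard => ?_⟩
    have hcond : σ t ∉ (if O t = ∅ then (∅ : Finset α) else P t) := by
      intro hc
      exact part1 t ⟨hm, hcard, hc⟩
    obtain ⟨L, hLsub, hL1, z, hzL, hmax, e1, -⟩ := hpred t hm hcard hcond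
    have hlam1 : (if O t = ∅ then (1 : ℚ) else lam t) = 1 := by
      split_ifs
      · rfl
      · exact part2 t
    have hLC : L = C t := hL1 hlam1
    subst hLC
    exact ⟨z, hzL, hmax, e1⟩
  -- C is a valid schedule
  have hval : Valid σ k C := by
    refine ⟨hC0, fun s => (inv s).2.2.2.2, fun s => ?_, fun s => ?_⟩ <;> {
      by_cases hm : σ s ∈ C s
      · rw [(hhit s hm).1]
        first
          | exact Finset.subset_union_left
          | exact hm
      · rcases Nat.lt_or_ge (C s).card k with hlt | hge
        · rw [(hfill s hm hlt).1]
          first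
            | (intro a ha
               rcases Finset.mem_insert.1 ha with rfl | ha
               · exact Finset.mem_union_right _ (Finset.mem_singleton_self _)
               · exact Finset.mem_union_left _ ha)
            | exact Finset.mem_insert_self _ _
        · have hcard : (C s).card = k := le_antisymm (inv s).2.2.2.2 hge
          obtain ⟨z, hz, -, e1⟩ := (hB s).2.2 hm hcard
          rw [e1]
          first
            | (intro a ha
               rcases Finset.mem_insert.1 ha with rfl | ha
               · exact Finset.mem_union_right _ (Finset.mem_singleton_self _)
               · exact Finset.mem_union_left _ (Finset.mem_sdiff.1 ha).1)
            | exact Finset.mem_insert_self _ _ }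
  exact belady_eq_opt hC0 hB hval n
end

section
/- If an item z evicted by Belady's rule has the property that every other item currently in the cache is requested at least once before z's next request, then in a phase-based marking scheme (phase ends when all old items are requested or evicted), a new phase begins no later than z's next request. -/
lemma O_mono {α : Type*} [DecidableEq α] (σ : ℕ → α) (O : ℕ → Finset α)
    (hOstep : ∀ u, O (u + 1) ⊆ O u \ {σ u}) :
    ∀ m n, m ≤ n → O n ⊆ O m := by
  intro m n h
  induction n with
  | zero => simpa [Nat.le_zero.mp h]
  | succ k ih =>
    rcases Nat.lt_or_ge m (k+1) with h' | h'
    · exact ((hOstep k).trans (Finset.sdiff_subset)).trans (ih (Nat.lt_succ_iff.mp h'))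
    · have : m = k + 1 := le_antisymm h h'
      simp [this]

/-- Suppose item `z` is evicted (by Belady's rule) at time `s` from a
cache `Ccache` containing it, its next request is at time `T > s` (no request of `z`
strictly in between), and every other cached item is requested at least once strictly
before `z`'s next request.  In a phase-based marking scheme, the set `O` of
unrequested old items satisfies `O (s+1) ⊆ Ccache \ {z}` (eviction of `z` removes `z`
from the old set) and a requested item is always removed from `O`, while `O` only
shrinks.  Then `O` is empty by time `T`, i.e. a new phase begins no later than `z`'s
next request. -/
theorem new_phase_before_next_request_of_belady_evicted_item
    {α : Type*} [DecidableEq α] (σ : ℕ → α) (Ccache : Finset α)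
    (O : ℕ → Finset α) (s T : ℕ) (z : α)
    (hz : z ∈ Ccache)
    (hsT : s < T) (hreq : σ T = z) (hfirst : ∀ u, s < u → u < T → σ u ≠ z)
    (hothers : ∀ y ∈ Ccache, y ≠ z → ∃ u, s < u ∧ u < T ∧ σ u = y)
    (hOsub : O (s + 1) ⊆ Ccache \ {z})
    (hOstep : ∀ u, O (u + 1) ⊆ O u \ {σ u}) :
    O T = ∅ := by
  rw [Finset.eq_empty_iff_forall_notMem]
  intro x hx
  have hxs : x ∈ O (s + 1) := O_mono σ O hOstep (s+1) T hsT hx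
  have hxC := hOsub hxs
  rw [Finset.mem_sdiff, Finset.mem_singleton] at hxC
  obtain ⟨u, hsu, huT, hσu⟩ := hothers x hxC.1 hxC.2
  have hxu : x ∈ O (u + 1) := O_mono σ O hOstep (u+1) T huT hx
  have := hOstep u hxu
  rw [Finset.mem_sdiff, Finset.mem_singleton] at this
  exact this.2 hσu.symm
end
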